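/- Let V ∈ U(d) be unitary and N ≥ 1. Then 0 ∈ W(V^{⊗N}) (equivalently, 0 lies in the convex hull of the eigenvalues of the unitary matrix V^{⊗N}) if and only if N·Θ(V) ≥ π. Moreover, if N·Θ(V) < π, then Θ(V^{⊗N}) = N·Θ(V). -/

import Mathlib

open Matrix MeasureTheory
open scoped ENNReal ComplexOrder

noncomputable section

namespace Paper

/-- Trace norm `‖X‖₁ = Tr √(Xᴴ X)`. -/
noncomputable def traceNorm {n : Type*} [Fintype n] [DecidableEq n] (X : Matrix n n ℂ) : ℝ :=
  (((Matrix.posSemidef_conjTranspose_mul_self X).1.eigenvectorUnitary : Matrix n n ℂ) *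
    Matrix.diagonal (((↑) : ℝ → ℂ) ∘ (Real.sqrt ·) ∘
      (Matrix.posSemidef_conjTranspose_mul_self X).1.eigenvalues) *
    (star (Matrix.posSemidef_conjTranspose_mul_self X).1.eigenvectorUnitary : Matrix n n ℂ)).trace.re

/-- `(S ⊗ id)(X)`, the map `S` applied to the first tensor factor. -/
def tensorApplyLeft {n n' m : Type*} [Fintype n] [Fintype m]
    (S : Matrix n n ℂ →ₗ[ℂ] Matrix n' n' ℂ)
    (X : Matrix (n × m) (n × m) ℂ) : Matrix (n' × m) (n' × m) ℂ :=
  Matrix.of fun p q => S (Matrix.of fun i j => X (i, p.2) (j, q.2)) p.1 q.1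

/-- Diamond norm of a linear map between matrix spaces. -/
noncomputable def diamondNorm {n n' : Type*} [Fintype n] [DecidableEq n] [Fintype n']
    [DecidableEq n'] (S : Matrix n n ℂ →ₗ[ℂ] Matrix n' n' ℂ) : ℝ :=
  sSup { t : ℝ | ∃ (k : ℕ) (X : Matrix (n × Fin (k + 1)) (n × Fin (k + 1)) ℂ),
    traceNorm X = 1 ∧ t = traceNorm (tensorApplyLeft S X) }

/-- The completely dephasing channel in the standard basis. -/
def dephaseMap (n : Type*) [Fintype n] [DecidableEq n] :
    Matrix n n ℂ →ₗ[ℂ] Matrix n n ℂ where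
  toFun X := Matrix.diagonal fun i => X i i
  map_add' X Y := by
    ext i j
    by_cases h : i = j <;> simp [Matrix.diagonal_apply, h]
  map_smul' c X := by
    ext i j
    by_cases h : i = j <;> simp [Matrix.diagonal_apply, h]

/-- The unitary channel `Φ_U(X) = U X Uᴴ`. -/
def unitaryChannel {n : Type*} [Fintype n] (U : Matrix n n ℂ) :
    Matrix n n ℂ →ₗ[ℂ] Matrix n n ℂ where
  toFun X := U * X * Uᴴ
  map_add' X Y := by simp [Matrix.mul_add, Matrix.add_mul]
  map_smul' c X := by simp [mul_smul_comm, smul_mul_assoc]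

/-- The von Neumann measurement channel `𝒫_U(σ) = Σ_i ⟨i|U† σ U|i⟩ |i⟩⟨i| = diag(U† σ U)`. -/
def measChannel {n : Type*} [Fintype n] [DecidableEq n] (U : Matrix n n ℂ) :
    Matrix n n ℂ →ₗ[ℂ] Matrix n n ℂ :=
  (dephaseMap n).comp (unitaryChannel Uᴴ)

/-- `N`-fold tensor (Kronecker) power of a matrix. -/
def tensorPow {d : ℕ} (U : Matrix (Fin d) (Fin d) ℂ) (N : ℕ) :
    Matrix (Fin N → Fin d) (Fin N → Fin d) ℂ :=
  Matrix.of fun f g => ∏ k, U (f k) (g k)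

/-- Tensor product of a family of `d × d` matrices. -/
def tensorFamily {d N : ℕ} (ρ : Fin N → Matrix (Fin d) (Fin d) ℂ) :
    Matrix (Fin N → Fin d) (Fin N → Fin d) ℂ :=
  Matrix.of fun f g => ∏ k, (ρ k) (f k) (g k)

/-- Density matrices. -/
def IsDensityMatrix {n : Type*} [Fintype n] (ρ : Matrix n n ℂ) : Prop :=
  ρ.PosSemidef ∧ ρ.trace = 1

/-- The set of diagonal unitary matrices `𝒟𝒰`. -/
def diagUnitary (n : Type*) [Fintype n] [DecidableEq n] : Set (Matrix n n ℂ) :=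
  { E | E ∈ Matrix.unitaryGroup n ℂ ∧ E.IsDiag }

/-- `Θ(U)`: the angle of the shortest arc of the unit circle containing all eigenvalues. -/
noncomputable def thetaArc {n : Type*} [Fintype n] [DecidableEq n] (U : Matrix n n ℂ) : ℝ :=
  sInf { t : ℝ | 0 ≤ t ∧ ∃ α : ℝ, ∀ lam ∈ spectrum ℂ U, ∃ s : ℝ, 0 ≤ s ∧ s ≤ t ∧
    lam = Complex.exp (Complex.I * (↑α + ↑s)) }

/-- `Υ(U) = min_{E ∈ 𝒟𝒰} Θ(UE)`. -/
noncomputable def upsilonArc {n : Type*} [Fintype n] [DecidableEq n] (U : Matrix n n ℂ) : ℝ :=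
  sInf { t : ℝ | ∃ E ∈ diagUnitary n, t = thetaArc (U * E) }

/-- Numerical range `W(A)`. -/
def numericalRange {n : Type*} [Fintype n] (A : Matrix n n ℂ) : Set ℂ :=
  { z | ∃ x : n → ℂ, (∑ i, ‖x i‖ ^ 2) = 1 ∧ z = star x ⬝ᵥ A.mulVec x }

/-- minimal modulus over the numerical range -/
noncomputable def nuMin {n : Type*} [Fintype n] (A : Matrix n n ℂ) : ℝ :=
  sInf { r : ℝ | ∃ z ∈ numericalRange A, r = ‖z‖ }

/-- Operator (spectral) norm of a matrix. -/
noncomputable def opNorm {n : Type*} [Fintype n] [DecidableEq n] (A : Matrix n n ℂ) : ℝ :=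
  ‖Matrix.toEuclideanCLM (𝕜 := ℂ) A‖

/-- Matrix of the orthogonal projection onto a subspace of `EuclideanSpace ℂ n`. -/
noncomputable def projMatrix {n : Type*} [Fintype n] [DecidableEq n]
    (K : Submodule ℂ (EuclideanSpace ℂ n)) : Matrix n n ℂ :=
  Matrix.toEuclideanLin.symm (K.subtype ∘ₗ (K.orthogonalProjectionOnto).toLinearMap)

/-- Matrix of the orthogonal projection onto the eigenspace of `A` for eigenvalue `lam`. -/
noncomputable def eigProj {n : Type*} [Fintype n] [DecidableEq n] (A : Matrix n n ℂ) (lam : ℂ) :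
    Matrix n n ℂ :=
  projMatrix (Module.End.eigenspace (Matrix.toEuclideanLin A) lam)

end Paper

namespace Paper

/-- Optimal unambiguous discrimination probability of `𝒫_𝟙` vs `𝒫_U` without entanglement. -/
noncomputable def puNoEnt {n : Type*} [Fintype n] [DecidableEq n] (U : Matrix n n ℂ) : ℝ :=
  sSup { t : ℝ | ∃ σ M₁ M₂ M₃ : Matrix n n ℂ,
    IsDensityMatrix σ ∧ M₁.PosSemidef ∧ M₂.PosSemidef ∧ M₃.PosSemidef ∧ M₁ + M₂ + M₃ = 1 ∧
    (M₂ * measChannel (1 : Matrix n n ℂ) σ).trace = 0 ∧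
    (M₁ * measChannel U σ).trace = 0 ∧
    t = (1 / 2) * (((M₁ * measChannel (1 : Matrix n n ℂ) σ).trace).re +
                   ((M₂ * measChannel U σ).trace).re) }

/-- Optimal entanglement-assisted unambiguous discrimination probability of `𝒫_𝟙` vs `𝒫_U`. -/
noncomputable def puEnt {n : Type*} [Fintype n] [DecidableEq n] (U : Matrix n n ℂ) : ℝ :=
  sSup { t : ℝ | ∃ (k : ℕ) (σ M₁ M₂ M₃ : Matrix (n × Fin (k + 1)) (n × Fin (k + 1)) ℂ),
    IsDensityMatrix σ ∧ M₁.PosSemidef ∧ M₂.PosSemidef ∧ M₃.PosSemidef ∧ M₁ + M₂ + M₃ = 1 ∧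
    (M₂ * tensorApplyLeft (measChannel (1 : Matrix n n ℂ)) σ).trace = 0 ∧
    (M₁ * tensorApplyLeft (measChannel U) σ).trace = 0 ∧
    t = (1 / 2) * (((M₁ * tensorApplyLeft (measChannel (1 : Matrix n n ℂ)) σ).trace).re +
                   ((M₂ * tensorApplyLeft (measChannel U) σ).trace).re) }

/-- `Π_A = Σ_{i ∈ A} |i⟩⟨i|`. -/
noncomputable def basisProj {n : Type*} [Fintype n] [DecidableEq n] (A : Finset n) :
    Matrix n n ℂ :=
  ∑ i ∈ A, Matrix.single i i (1 : ℂ)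

/-- `ℙ_{Γ,Δ}`: projector onto `span{U|i⟩ : i ∈ Γᶜ} ∩ span{|j⟩ : j ∈ Δᶜ}`. -/
noncomputable def PGD {n : Type*} [Fintype n] [DecidableEq n] (U : Matrix n n ℂ)
    (Γ Δ : Finset n) : Matrix n n ℂ :=
  projMatrix
    ((Submodule.span ℂ { v : EuclideanSpace ℂ n |
        ∃ i ∉ Γ, v = (WithLp.equiv 2 (n → ℂ)).symm (fun r => U r i) }) ⊓
     (Submodule.span ℂ { v : EuclideanSpace ℂ n |
        ∃ j ∉ Δ, v = (WithLp.equiv 2 (n → ℂ)).symm (Pi.single j 1) }))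

/-- `W` acting on the `k`-th of `N` registers (identity elsewhere). -/
def actOn {d : ℕ} (N : ℕ) (W : Matrix (Fin d) (Fin d) ℂ) (k : ℕ) :
    Matrix (Fin N → Fin d) (Fin N → Fin d) ℂ :=
  Matrix.of fun f g => ∏ j : Fin N,
    if (j : ℕ) = k then W (f j) (g j) else (if f j = g j then (1 : ℂ) else 0)

/-- A system operator extended by identity on the ancilla. -/
def sysOp {d N m : ℕ} (A : Matrix (Fin N → Fin d) (Fin N → Fin d) ℂ) :
    Matrix ((Fin N → Fin d) × Fin m) ((Fin N → Fin d) × Fin m) ℂ :=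
  Matrix.of fun p q => A p.1 q.1 * (if p.2 = q.2 then (1 : ℂ) else 0)

/-- `C` is classically controlled on the first `k` registers, i.e. of the form
`Σ_{i₁,…,i_k} |i₁…i_k⟩⟨i₁…i_k| ⊗ V_{i₁…i_k}`. -/
def ControlledOnFirst {d N m : ℕ} (k : ℕ)
    (C : Matrix ((Fin N → Fin d) × Fin m) ((Fin N → Fin d) × Fin m) ℂ) : Prop :=
  ∀ p q, (∃ j : Fin N, (j : ℕ) < k ∧ p.1 j ≠ q.1 j) → C p q = 0

/-- The sequential-scheme unitary
`A_W = (𝟙⊗…⊗W⊗𝟙ₘ)·C_{N-1}·…·C₁·(W⊗𝟙⊗…⊗𝟙ₘ)`. -/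
noncomputable def seqUnitary {d N m : ℕ} (W : Matrix (Fin d) (Fin d) ℂ)
    (C : ℕ → Matrix ((Fin N → Fin d) × Fin m) ((Fin N → Fin d) × Fin m) ℂ) :
    Matrix ((Fin N → Fin d) × Fin m) ((Fin N → Fin d) × Fin m) ℂ :=
  (((List.range (N - 1)).reverse.map fun j =>
      sysOp (actOn N W (j + 1)) * C (j + 1)).prod) * sysOp (actOn N W 0)

/-- Dephasing in the standard product basis on the first `N` registers only. -/
def dephaseFirst (d N m : ℕ) :
    Matrix ((Fin N → Fin d) × Fin m) ((Fin N → Fin d) × Fin m) ℂ →ₗ[ℂ]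
    Matrix ((Fin N → Fin d) × Fin m) ((Fin N → Fin d) × Fin m) ℂ where
  toFun X := Matrix.of fun p q => if p.1 = q.1 then X p q else 0
  map_add' X Y := by
    ext p q
    by_cases h : p.1 = q.1 <;> simp [h]
  map_smul' c X := by
    ext p q
    by_cases h : p.1 = q.1 <;> simp [h]

/-- The Hadamard matrix. -/
noncomputable def Hmat : Matrix (Fin 2) (Fin 2) ℂ :=
  (((1 : ℝ) / Real.sqrt 2 : ℝ) : ℂ) • !![1, 1; 1, -1]

/-- `ψ = (|1⟩⊗|1⟩ − |2⟩⊗|2⟩)/√2`. -/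
noncomputable def psiVec : Fin 2 × Fin 2 → ℂ := fun p =>
  if p = (0, 0) then (((1 : ℝ) / Real.sqrt 2 : ℝ) : ℂ)
  else if p = (1, 1) then -(((1 : ℝ) / Real.sqrt 2 : ℝ) : ℂ) else 0

/-- `ρ = |ψ⟩⟨ψ|`. -/
noncomputable def rhoPsi : Matrix (Fin 2 × Fin 2) (Fin 2 × Fin 2) ℂ :=
  Matrix.of fun p q => psiVec p * (starRingEnd ℂ) (psiVec q)

end Paper

namespace Paper

/-!
Diagonalise `V = U diag(μ) U*`, with `‖μ i‖ = 1`. Then `V^{⊗N}` is unitarily equivalent to the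
diagonal matrix of the products `∏ₖ μ (f k)`, so its numerical range is the convex hull of these
products; and `0` lies in the convex hull of finitely many unit complex numbers exactly when no
closed arc shorter than `π` contains them all (such an arc lies in an open half-plane, and a line
separating `0` from the hull produces one).

Products of `N` points of an arc of width `t` lie on an arc of width `N t`, so
`Θ(V^{⊗N}) ≤ N Θ(V)`. Conversely, let all the products lie on an arc of width `t < π`. Replacing
the factors of `μ i ^ N` one at a time by `μ j` reaches `μ j ^ N` in `N` rotations by
`arg (μ j / μ i)`; since every intermediate product stays on the short arc, these rotations cannot
wrap around, so `N · arg (μ j / μ i) ≤ t` for all `i, j`, and the `μ i` lie on an arc of width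
`t / N`. Hence `min (N Θ(V)) π ≤ Θ(V^{⊗N})`, which with the first bound gives both claims.
-/

section Arc

open Complex
open scoped Real

def MemArc (α t : ℝ) (z : ℂ) : Prop :=
  ∃ s : ℝ, 0 ≤ s ∧ s ≤ t ∧ z = exp (I * (α + s))

noncomputable def arcWidth (S : Set ℂ) : ℝ :=
  sInf {t : ℝ | 0 ≤ t ∧ ∃ α : ℝ, ∀ z ∈ S, MemArc α t z}

theorem thetaArc_eq_arcWidth {n : Type*} [Fintype n] [DecidableEq n] (U : Matrix n n ℂ) :
    thetaArc U = arcWidth (spectrum ℂ U) := rfl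

variable {α t : ℝ} {z : ℂ}

theorem exp_I_mul_arg {u : ℂ} (hu : ‖u‖ = 1) : exp (I * arg u) = u := by
  simpa [hu, mul_comm] using norm_mul_exp_arg_mul_I u

theorem memArc_of_arg_mem (hz : ‖z‖ = 1) (h₁ : α ≤ arg z) (h₂ : arg z ≤ α + t) :
    MemArc α t z :=
  ⟨arg z - α, by linarith, by linarith, by
    conv_lhs => rw [← exp_I_mul_arg hz]
    push_cast
    ring_nf⟩

theorem MemArc.of_mul {w : ℂ} (hw : ‖w‖ = 1) (h : MemArc α t (w * z)) :
    MemArc (α - arg w) t z := by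
  obtain ⟨s, hs0, hst, hs⟩ := h
  refine ⟨s, hs0, hst, ?_⟩
  have hw0 : w ≠ 0 := norm_ne_zero_iff.mp (by simp [hw])
  rw [eq_div_of_mul_eq hw0 ((mul_comm z w).trans hs)]
  conv_lhs => rw [← exp_I_mul_arg hw, ← exp_sub]
  push_cast
  ring_nf

theorem MemArc.prod {ι : Type*} [Fintype ι] {w : ι → ℂ} (h : ∀ k, MemArc α t (w k)) :
    MemArc (Fintype.card ι * α) (Fintype.card ι * t) (∏ k, w k) := by
  choose s hs0 hst hs using h
  refine ⟨∑ k, s k, Finset.sum_nonneg fun k _ => hs0 k, ?_, ?_⟩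
  · simpa using Finset.sum_le_sum fun k (_ : k ∈ Finset.univ) => hst k
  · rw [Finset.prod_congr rfl fun k _ => hs k, ← exp_sum]
    simp only [← Finset.mul_sum, Finset.sum_add_distrib]
    simp

theorem arg_exp_div_exp {s s' : ℝ} (h : |s' - s| < π) :
    arg (exp (I * (α + s')) / exp (I * (α + s))) = s' - s := by
  rw [← exp_sub, show I * (α + s') - I * (α + s) = ((s' - s : ℝ) : ℂ) * I by push_cast; ring,
    arg_exp_mul_I, toIocMod_eq_self]
  constructor <;> linarith [abs_lt.mp h]

theorem arcWidth_le {S : Set ℂ} (ht : 0 ≤ t) (h : ∀ z ∈ S, MemArc α t z) : arcWidth S ≤ t :=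
  csInf_le ⟨0, fun _ ht => ht.1⟩ ⟨ht, α, h⟩

theorem exists_memArc_of_arcWidth_lt {S : Set ℂ} (hS : ∀ z ∈ S, ‖z‖ = 1) {c : ℝ}
    (h : arcWidth S < c) : ∃ t α, 0 ≤ t ∧ t < c ∧ ∀ z ∈ S, MemArc α t z := by
  have hne : {t : ℝ | 0 ≤ t ∧ ∃ α : ℝ, ∀ z ∈ S, MemArc α t z}.Nonempty :=
    ⟨2 * π, by positivity, -π, fun z hz => memArc_of_arg_mem (hS z hz)
      (by linarith [neg_pi_lt_arg z]) (by linarith [arg_le_pi z])⟩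
  obtain ⟨t, ⟨ht0, α, hα⟩, htc⟩ := exists_lt_of_csInf_lt hne h
  exact ⟨t, α, ht0, htc, hα⟩

theorem zero_notMem_convexHull_of_memArc {S : Set ℂ} (ht0 : 0 ≤ t) (ht : t < π)
    (h : ∀ z ∈ S, MemArc α t z) : (0 : ℂ) ∉ convexHull ℝ S := by
  set w := exp (-(I * (α + t / 2)))
  -- rotating by `w` centres the arc at `1`, inside the half-plane `cos (t / 2) ≤ re`
  have hsub : S ⊆ (w * ·) ⁻¹' {z | Real.cos (t / 2) ≤ z.re} := by
    intro z hz
    obtain ⟨s, hs0, hst, rfl⟩ := h z hz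
    have hrot : w * exp (I * (α + s)) = exp (((s - t / 2 : ℝ) : ℂ) * I) := by
      rw [← exp_add]
      push_cast
      ring_nf
    simp only [Set.mem_preimage, Set.mem_ofPred_eq, hrot, exp_ofReal_mul_I_re]
    rw [← Real.cos_abs (s - t / 2)]
    exact Real.cos_le_cos_of_nonneg_of_le_pi (abs_nonneg _) (by linarith)
      (abs_le.mpr ⟨by linarith, by linarith⟩)
  have hconv : Convex ℝ ((w * ·) ⁻¹' {z : ℂ | Real.cos (t / 2) ≤ z.re}) :=
    (convex_halfSpace_re_ge _).linear_preimage (LinearMap.mulLeft ℝ w)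
  intro h0
  have := convexHull_min hsub hconv h0
  simp only [Set.mem_preimage, mul_zero, Set.mem_ofPred_eq, zero_re] at this
  linarith [Real.cos_pos_of_mem_Ioo (x := t / 2) ⟨by linarith, by linarith⟩]

theorem exists_memArc_of_zero_notMem_convexHull {S : Set ℂ} (hS : S.Finite)
    (hS1 : ∀ z ∈ S, ‖z‖ = 1) (h0 : (0 : ℂ) ∉ convexHull ℝ S) :
    ∃ t α, 0 ≤ t ∧ t < π ∧ ∀ z ∈ S, MemArc α t z := by
  rcases S.eq_empty_or_nonempty with rfl | hne
  · exact ⟨0, 0, le_rfl, Real.pi_pos, by simp⟩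
  obtain ⟨f, u, hf0, hfS⟩ := geometric_hahn_banach_point_closed (convex_convexHull ℝ S)
    (hS.isClosed_convexHull (𝕜 := ℝ)) h0
  -- every real functional on `ℂ` is `z ↦ re (w z)` for some `w`
  set w : ℂ := f 1 - f I * I
  have hfw : ∀ z, f z = (w * z).re := by
    intro z
    have hz : z = z.re • (1 : ℂ) + z.im • I := by simp [Complex.real_smul]
    conv_lhs => rw [hz, map_add, map_smul, map_smul, smul_eq_mul, smul_eq_mul]
    simp [w]
    ring
  have hpos : ∀ z ∈ S, 0 < (w * z).re := fun z hz => by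
    rw [← hfw]
    linarith [map_zero f, hfS z (subset_convexHull ℝ S hz)]
  have hw0 : w ≠ 0 := by
    obtain ⟨z, hz⟩ := hne
    rintro hw
    simpa [hw] using hpos z hz
  set v : ℂ := w / ‖w‖
  have hv : ‖v‖ = 1 := by simp [v, hw0]
  have hvS : ∀ z ∈ S, ‖v * z‖ = 1 := fun z hz => by rw [norm_mul, hv, hS1 z hz, one_mul]
  have harg : ∀ z ∈ S, |arg (v * z)| < π / 2 := fun z hz =>
    abs_arg_lt_pi_div_two_iff.mpr <| Or.inl <| by
      rw [show v * z = ((‖w‖⁻¹ : ℝ) : ℂ) * (w * z) by simp [v]; ring, re_ofReal_mul]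
      exact mul_pos (by positivity) (hpos z hz)
  obtain ⟨a, ha, hamin⟩ := Set.exists_min_image S (fun z => arg (v * z)) hS hne
  obtain ⟨b, hb, hbmax⟩ := Set.exists_max_image S (fun z => arg (v * z)) hS hne
  refine ⟨arg (v * b) - arg (v * a), arg (v * a) - arg v, by linarith [hamin b hb], ?_,
    fun z hz => MemArc.of_mul hv (memArc_of_arg_mem (hvS z hz) (hamin z hz) ?_)⟩
  · linarith [abs_lt.mp (harg a ha), abs_lt.mp (harg b hb)]
  · linarith [hbmax z hz]

theorem zero_mem_convexHull_iff_pi_le_arcWidth {S : Set ℂ} (hS : S.Finite)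
    (hS1 : ∀ z ∈ S, ‖z‖ = 1) : (0 : ℂ) ∈ convexHull ℝ S ↔ π ≤ arcWidth S := by
  constructor
  · intro h0
    by_contra! hlt
    obtain ⟨t, α, ht0, ht, hα⟩ := exists_memArc_of_arcWidth_lt hS1 hlt
    exact zero_notMem_convexHull_of_memArc ht0 ht hα h0
  · intro hπ
    by_contra h0
    obtain ⟨t, α, ht0, ht, hα⟩ := exists_memArc_of_zero_notMem_convexHull hS hS1 h0
    linarith [arcWidth_le ht0 hα]

theorem prod_ite_val_lt {ι M : Type*} [CommMonoid M] (μ : ι → M) (i j : ι) {N k : ℕ}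
    (hk : k ≤ N) : ∏ l : Fin N, μ (if (l : ℕ) < k then j else i) = μ j ^ k * μ i ^ (N - k) := by
  rw [Finset.prod_apply_ite, Finset.prod_const, Finset.prod_const, Finset.filter_not,
    Finset.card_sdiff, Fin.card_filter_val_lt]
  simp [Fin.card_filter_val_lt, hk]

section Products

variable {ι : Type*} {μ : ι → ℂ} {N : ℕ}

-- `k ↦ μ j ^ k * μ i ^ (N - k)` moves along the arc by exactly `arg (μ j / μ i)` per step.
theorem natCast_mul_arg_div_le_of_prod_memArc (hμ : ∀ i, μ i ≠ 0) (ht : t < π)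
    (h : ∀ f : Fin N → ι, MemArc α t (∏ k, μ (f k))) (i j : ι) : N * arg (μ j / μ i) ≤ t := by
  choose s hs0 hst hs using fun k : ℕ => h fun l => if (l : ℕ) < k then j else i
  have step : ∀ k ∈ Finset.range N, arg (μ j / μ i) = s (k + 1) - s k := by
    intro k hk
    have hk := Finset.mem_range.mp hk
    have hratio : μ j / μ i = exp (I * (α + s (k + 1))) / exp (I * (α + s k)) := by
      rw [← hs, ← hs, prod_ite_val_lt μ i j hk, prod_ite_val_lt μ i j hk.le,
        show N - k = N - (k + 1) + 1 by omega, pow_succ, pow_succ]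
      field_simp [hμ i, hμ j]
    rw [hratio, arg_exp_div_exp (abs_sub_lt_iff.mpr ⟨by linarith [hs0 k, hst (k + 1)],
      by linarith [hs0 (k + 1), hst k]⟩)]
  calc N * arg (μ j / μ i) = ∑ k ∈ Finset.range N, (s (k + 1) - s k) := by
        rw [← Finset.sum_congr rfl step]
        simp
    _ = s N - s 0 := Finset.sum_range_sub s N
    _ ≤ t := by linarith [hst N, hs0 0]

theorem exists_memArc_of_arg_div_le [Finite ι] {c : ℝ} (ht : t < π)
    (harc : ∀ i, MemArc α t (μ i)) (hc : ∀ i j, arg (μ j / μ i) ≤ c) :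
    ∃ β, ∀ i, MemArc β c (μ i) := by
  rcases isEmpty_or_nonempty ι with hι | hι
  · exact ⟨0, fun i => isEmptyElim i⟩
  choose s hs0 hst hs using harc
  obtain ⟨m, -, hm⟩ := Set.exists_min_image Set.univ s Set.finite_univ Set.univ_nonempty
  refine ⟨α + s m, fun i => ⟨s i - s m, by linarith [hm i trivial], ?_, ?_⟩⟩
  · have := hc m i
    rwa [hs i, hs m, arg_exp_div_exp (abs_sub_lt_iff.mpr ⟨by linarith [hs0 m, hst i],
      by linarith [hs0 i, hst m]⟩)] at this
  · rw [hs i]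
    push_cast
    ring_nf

theorem exists_memArc_of_prod_memArc [Finite ι] (hμ : ∀ i, ‖μ i‖ = 1) (hN : 1 ≤ N)
    (ht : t < π) (h : ∀ f : Fin N → ι, MemArc α t (∏ k, μ (f k))) :
    ∃ β, ∀ i, MemArc β (t / N) (μ i) := by
  rcases isEmpty_or_nonempty ι with hι | ⟨⟨i₀⟩⟩
  · exact ⟨0, fun i => isEmptyElim i⟩
  obtain ⟨M, rfl⟩ : ∃ M, N = M + 1 := ⟨N - 1, by omega⟩
  have harc : ∀ i, MemArc (α - arg (μ i₀ ^ M)) t (μ i) := fun i =>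
    MemArc.of_mul (by simp [hμ]) <| by
      simpa [Fin.prod_univ_succ, mul_comm] using h (Fin.cons i fun _ => i₀)
  refine exists_memArc_of_arg_div_le ht harc fun i j => ?_
  rw [le_div_iff₀ (by positivity), mul_comm]
  exact natCast_mul_arg_div_le_of_prod_memArc (fun i => norm_ne_zero_iff.mp (by simp [hμ])) ht h
    i j

theorem norm_eq_one_of_mem_range_prod (hμ : ∀ i, ‖μ i‖ = 1) :
    ∀ z ∈ Set.range fun f : Fin N → ι => ∏ k, μ (f k), ‖z‖ = 1 := by
  simp [hμ]

theorem arcWidth_range_prod_le (hμ : ∀ i, ‖μ i‖ = 1) (hN : 1 ≤ N) :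
    arcWidth (Set.range fun f : Fin N → ι => ∏ k, μ (f k)) ≤ N * arcWidth (Set.range μ) := by
  have hNpos : (0 : ℝ) < N := by exact_mod_cast hN
  by_contra! hlt
  obtain ⟨t, α, ht0, ht, hα⟩ := exists_memArc_of_arcWidth_lt (by simpa using hμ)
    ((lt_div_iff₀' hNpos).mpr hlt)
  have := arcWidth_le (S := Set.range fun f : Fin N → ι => ∏ k, μ (f k)) (t := N * t)
    (by positivity) (Set.forall_mem_range.mpr fun f => by
      simpa using MemArc.prod fun k => hα _ (Set.mem_range_self (f k)))
  linarith [(lt_div_iff₀' hNpos).mp ht]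

theorem min_mul_arcWidth_le_arcWidth_range_prod [Finite ι] (hμ : ∀ i, ‖μ i‖ = 1) (hN : 1 ≤ N) :
    min (N * arcWidth (Set.range μ)) π ≤
      arcWidth (Set.range fun f : Fin N → ι => ∏ k, μ (f k)) := by
  have hNpos : (0 : ℝ) < N := by exact_mod_cast hN
  by_contra! hlt
  obtain ⟨t, α, ht0, ht, hα⟩ := exists_memArc_of_arcWidth_lt (norm_eq_one_of_mem_range_prod hμ) hlt
  obtain ⟨β, hβ⟩ := exists_memArc_of_prod_memArc hμ hN (ht.trans_le (min_le_right _ _))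
    fun f => hα _ (Set.mem_range_self f)
  have := arcWidth_le (S := Set.range μ) (by positivity) (Set.forall_mem_range.mpr hβ)
  rw [le_div_iff₀' hNpos] at this
  linarith [ht.trans_le (min_le_left _ _)]

end Products

end Arc

section TensorPow

variable {d N : ℕ}

theorem tensorPow_mul (A B : Matrix (Fin d) (Fin d) ℂ) :
    tensorPow (A * B) N = tensorPow A N * tensorPow B N := by
  ext f g
  simp only [tensorPow, mul_apply, of_apply]
  rw [Finset.prod_univ_sum, Fintype.piFinset_univ]
  simp [Finset.prod_mul_distrib]

theorem tensorPow_diagonal (μ : Fin d → ℂ) :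
    tensorPow (diagonal μ) N = diagonal fun f : Fin N → Fin d => ∏ k, μ (f k) := by
  ext f g
  by_cases h : f = g
  · subst h
    simp [tensorPow]
  · obtain ⟨k, hk⟩ := Function.ne_iff.mp h
    simp only [tensorPow, of_apply, diagonal_apply_ne _ h]
    exact Finset.prod_eq_zero (Finset.mem_univ k) (by simp [hk])

theorem tensorPow_one : tensorPow (1 : Matrix (Fin d) (Fin d) ℂ) N = 1 := by
  simpa using tensorPow_diagonal (N := N) (fun _ : Fin d => (1 : ℂ))

theorem tensorPow_star (A : Matrix (Fin d) (Fin d) ℂ) :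
    tensorPow (star A) N = star (tensorPow A N) := by
  ext f g
  simp [tensorPow, star_apply]

theorem tensorPow_mem_unitaryGroup {U : Matrix (Fin d) (Fin d) ℂ}
    (hU : U ∈ unitaryGroup (Fin d) ℂ) : tensorPow U N ∈ unitaryGroup (Fin N → Fin d) ℂ := by
  rw [mem_unitaryGroup_iff, ← tensorPow_star, ← tensorPow_mul, mem_unitaryGroup_iff.mp hU,
    tensorPow_one]

end TensorPow

section UnitaryConj

variable {n : Type*} [Fintype n] [DecidableEq n]

theorem star_mul_unitary_conj_mul {U : Matrix n n ℂ} (hU : U ∈ unitaryGroup n ℂ)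
    (A : Matrix n n ℂ) : star U * (U * A * star U) * U = A := by
  have hUU : star U * U = 1 := mem_unitaryGroup_iff'.mp hU
  rw [← Matrix.mul_assoc, ← Matrix.mul_assoc, hUU, Matrix.one_mul, Matrix.mul_assoc, hUU,
    Matrix.mul_one]

theorem spectrum_unitary_conj (A : Matrix n n ℂ) {U : Matrix n n ℂ}
    (hU : U ∈ unitaryGroup n ℂ) : spectrum ℂ (U * A * star U) = spectrum ℂ A :=
  Unitary.spectrum_star_right_conjugate (U := ⟨U, hU⟩)

theorem norm_eq_one_of_diagonal_mem_unitaryGroup {μ : n → ℂ} (h : diagonal μ ∈ unitaryGroup n ℂ)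
    (i : n) : ‖μ i‖ = 1 := by
  have := congr_fun₂ (mem_unitaryGroup_iff.mp h) i i
  simp only [star_eq_conjTranspose, diagonal_conjTranspose, diagonal_mul_diagonal,
    diagonal_apply_eq, one_apply_eq, Pi.star_apply, RCLike.star_def, Complex.mul_conj'] at this
  exact (pow_eq_one_iff_of_nonneg (norm_nonneg _) two_ne_zero).mp (by exact_mod_cast this)

end UnitaryConj

section NumericalRange

variable {n : Type*} [Fintype n]

theorem star_dotProduct_self_eq_sum_norm_sq (x : n → ℂ) :
    star x ⬝ᵥ x = ((∑ i, ‖x i‖ ^ 2 : ℝ) : ℂ) := by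
  simp [dotProduct, Complex.mul_conj', mul_comm]

theorem mem_numericalRange_iff {A : Matrix n n ℂ} {z : ℂ} :
    z ∈ numericalRange A ↔ ∃ x : n → ℂ, star x ⬝ᵥ x = 1 ∧ z = star x ⬝ᵥ A *ᵥ x := by
  simp only [numericalRange, Set.mem_ofPred_eq, star_dotProduct_self_eq_sum_norm_sq,
    Complex.ofReal_eq_one]

variable [DecidableEq n]

theorem numericalRange_diagonal (ν : n → ℂ) :
    numericalRange (diagonal ν) = convexHull ℝ (Set.range ν) := by
  have hsimplex :
      numericalRange (diagonal ν) = Fintype.linearCombination ℝ ν '' stdSimplex ℝ n := by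
    ext z
    constructor
    · rintro ⟨x, hx, rfl⟩
      refine ⟨fun i => ‖x i‖ ^ 2, ⟨fun i => by positivity, hx⟩, ?_⟩
      simp only [Fintype.linearCombination_apply, dotProduct, mulVec_diagonal, Pi.star_apply]
      refine Finset.sum_congr rfl fun i _ => ?_
      rw [Complex.real_smul, Complex.ofReal_pow, ← Complex.mul_conj', RCLike.star_def]
      ring
    · rintro ⟨p, ⟨hp0, hp1⟩, rfl⟩
      refine ⟨fun i => Real.sqrt (p i), by simpa [Real.sq_sqrt (hp0 _)] using hp1, ?_⟩
      simp only [Fintype.linearCombination_apply, dotProduct, mulVec_diagonal, Pi.star_apply]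
      refine Finset.sum_congr rfl fun i _ => ?_
      rw [Complex.real_smul, RCLike.star_def, Complex.conj_ofReal]
      have hsq : (Real.sqrt (p i) : ℂ) * Real.sqrt (p i) = p i := by
        rw [← Complex.ofReal_mul, Real.mul_self_sqrt (hp0 i)]
      linear_combination -ν i * hsq
  rw [hsimplex, ← convexHull_basis_eq_stdSimplex, LinearMap.image_convexHull, ← Set.range_comp]
  congr 2
  ext i
  simp [Fintype.linearCombination_apply]

theorem numericalRange_unitary_conj_subset (A : Matrix n n ℂ) {U : Matrix n n ℂ}
    (hU : U ∈ unitaryGroup n ℂ) : numericalRange (U * A * star U) ⊆ numericalRange A := by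
  simp only [Set.subset_def, mem_numericalRange_iff]
  rintro z ⟨x, hx, rfl⟩
  have hUU : U * Uᴴ = 1 := mem_unitaryGroup_iff.mp hU
  refine ⟨Uᴴ *ᵥ x, ?_, ?_⟩ <;>
    simp only [star_mulVec, conjTranspose_conjTranspose, ← dotProduct_mulVec, mulVec_mulVec,
      hUU, one_mulVec, hx, star_eq_conjTranspose, Matrix.mul_assoc]

theorem numericalRange_unitary_conj (A : Matrix n n ℂ) {U : Matrix n n ℂ}
    (hU : U ∈ unitaryGroup n ℂ) : numericalRange (U * A * star U) = numericalRange A := by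
  refine (numericalRange_unitary_conj_subset A hU).antisymm ?_
  simpa only [star_star, star_mul_unitary_conj_mul hU] using
    numericalRange_unitary_conj_subset (U * A * star U) (Unitary.star_mem hU)

end NumericalRange

section Diagonalization

variable {n : Type*} [Fintype n] [DecidableEq n]

open Module.End in
theorem exists_orthonormalBasis_joint_eigenvectors {𝕜 : Type*} [RCLike 𝕜] {A B : Matrix n n 𝕜}
    (hA : A.IsHermitian) (hB : B.IsHermitian) (hAB : Commute A B) :
    ∃ b : OrthonormalBasis n 𝕜 (EuclideanSpace 𝕜 n),
      ∀ a, ∃ x y : 𝕜, A *ᵥ b a = x • b a ∧ B *ᵥ b a = y • b a := by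
  classical
  have hA' := isSymmetric_toEuclideanLin_iff.mpr hA
  have hB' := isSymmetric_toEuclideanLin_iff.mpr hB
  set E : 𝕜 × 𝕜 → Submodule 𝕜 (EuclideanSpace 𝕜 n) := fun i =>
    eigenspace (toEuclideanLin A) i.2 ⊓ eigenspace (toEuclideanLin B) i.1
  have hint : DirectSum.IsInternal E :=
    hA'.directSum_isInternal_of_commute hB' (hAB.map (toLpLinAlgEquiv 2))
  -- the basis construction needs a finite index set: keep the nonzero joint eigenspaces
  have : Fintype {i // E i ≠ ⊥} :=
    (WellFoundedGT.finite_ne_bot_of_iSupIndep hint.submodule_iSupIndep).fintype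
  replace hint := DirectSum.isInternal_ne_bot_iff.mpr hint
  have horth := (hA'.orthogonalFamily_eigenspace_inf_eigenspace hB').comp
    (Subtype.val_injective (p := fun i => E i ≠ ⊥))
  have hn := finrank_euclideanSpace (𝕜 := 𝕜) (ι := n)
  let b : OrthonormalBasis (Fin (Fintype.card n)) 𝕜 (EuclideanSpace 𝕜 n) :=
    hint.subordinateOrthonormalBasis hn horth
  have hb : ∀ a, ∃ x y : 𝕜, A *ᵥ b a = x • b a ∧ B *ᵥ b a = y • b a := fun a => by
    have hmem := hint.subordinateOrthonormalBasis_subordinate hn a horth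
    exact ⟨_, _, congr_arg WithLp.ofLp (mem_eigenspace_iff.mp hmem.1),
      congr_arg WithLp.ofLp (mem_eigenspace_iff.mp hmem.2)⟩
  let e := Fintype.equivOfCardEq (Fintype.card_fin (Fintype.card n))
  exact ⟨b.reindex e, fun a => by simpa using hb (e.symm a)⟩

theorem exists_hermitian_commute_of_isStarNormal {V : Matrix n n ℂ} (hV : IsStarNormal V) :
    ∃ A B : Matrix n n ℂ, A.IsHermitian ∧ B.IsHermitian ∧ Commute A B ∧
      V = (1 / 2 : ℂ) • A + (Complex.I / 2) • B := by
  refine ⟨V + star V, Complex.I • (star V - V), ?_, ?_, ?_, ?_⟩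
  · simp [IsHermitian, ← star_eq_conjTranspose, add_comm]
  · simp [IsHermitian, ← star_eq_conjTranspose, ← smul_neg]
  · simp only [Commute, SemiconjBy, Matrix.mul_smul, Matrix.smul_mul, add_mul, mul_add,
      mul_sub, sub_mul, hV.star_comm_self.eq]
  · simp only [smul_smul, smul_add, smul_sub]
    rw [show Complex.I / 2 * Complex.I = -(1 / 2) by
      rw [div_mul_eq_mul_div, Complex.I_mul_I]; ring]
    module

theorem exists_orthonormalBasis_eigenvectors_of_isStarNormal {V : Matrix n n ℂ}
    (hV : IsStarNormal V) :
    ∃ (b : OrthonormalBasis n ℂ (EuclideanSpace ℂ n)) (μ : n → ℂ),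
      ∀ a, V *ᵥ b a = μ a • b a := by
  obtain ⟨A, B, hA, hB, hAB, rfl⟩ := exists_hermitian_commute_of_isStarNormal hV
  obtain ⟨b, hb⟩ := exists_orthonormalBasis_joint_eigenvectors hA hB hAB
  choose x y hx hy using hb
  refine ⟨b, fun a => (1 / 2) * x a + (Complex.I / 2) * y a, fun a => ?_⟩
  rw [add_mulVec, smul_mulVec, smul_mulVec, hx, hy]
  module

theorem exists_unitary_diagonal_of_isStarNormal {V : Matrix n n ℂ} (hV : IsStarNormal V) :
    ∃ U ∈ unitaryGroup n ℂ, ∃ μ : n → ℂ, V = U * diagonal μ * star U := by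
  obtain ⟨b, μ, hb⟩ := exists_orthonormalBasis_eigenvectors_of_isStarNormal hV
  set U := (EuclideanSpace.basisFun n ℂ).toBasis.toMatrix b
  have hU : U ∈ unitaryGroup n ℂ :=
    (EuclideanSpace.basisFun n ℂ).toMatrix_orthonormalBasis_mem_unitary b
  have hVU : V * U = U * diagonal μ := by
    ext i j
    rw [mul_diagonal, mul_apply]
    simpa [U, Module.Basis.toMatrix_apply, mulVec, dotProduct, mul_comm] using
      congr_fun (hb j) i
  refine ⟨U, hU, μ, ?_⟩
  rw [← hVU, Matrix.mul_assoc, mem_unitaryGroup_iff.mp hU, Matrix.mul_one]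

end Diagonalization

theorem stmt19 (d N : ℕ) (hN : 1 ≤ N) (V : Matrix (Fin d) (Fin d) ℂ)
    (hV : V ∈ Matrix.unitaryGroup (Fin d) ℂ) :
    ((0 : ℂ) ∈ numericalRange (tensorPow V N) ↔ Real.pi ≤ (N : ℝ) * thetaArc V) ∧
    ((N : ℝ) * thetaArc V < Real.pi → thetaArc (tensorPow V N) = (N : ℝ) * thetaArc V) := by
  obtain ⟨U, hU, μ, rfl⟩ :=
    exists_unitary_diagonal_of_isStarNormal (isStarNormal_of_mem_unitary hV)
  have hμ : ∀ i, ‖μ i‖ = 1 := norm_eq_one_of_diagonal_mem_unitaryGroup <| by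
    simpa only [star_mul_unitary_conj_mul hU] using
      mul_mem (mul_mem (Unitary.star_mem hU) hV) hU
  have hpow : tensorPow (U * diagonal μ * star U) N =
      tensorPow U N * diagonal (fun f : Fin N → Fin d => ∏ k, μ (f k)) * star (tensorPow U N) := by
    rw [tensorPow_mul, tensorPow_mul, tensorPow_star, tensorPow_diagonal]
  have hUN := tensorPow_mem_unitaryGroup (N := N) hU
  rw [thetaArc_eq_arcWidth, thetaArc_eq_arcWidth, hpow, numericalRange_unitary_conj _ hUN,
    numericalRange_diagonal, spectrum_unitary_conj _ hUN, spectrum_unitary_conj _ hU,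
    spectrum_diagonal, spectrum_diagonal, zero_mem_convexHull_iff_pi_le_arcWidth
      (Set.finite_range _) (norm_eq_one_of_mem_range_prod hμ)]
  have hle := arcWidth_range_prod_le hμ hN
  have hge := min_mul_arcWidth_le_arcWidth_range_prod hμ hN
  exact ⟨⟨fun h => h.trans hle, fun h => (le_min h le_rfl).trans hge⟩,
    fun h => hle.antisymm ((min_eq_left h.le).symm.trans_le hge)⟩

end Paper
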